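/- arXiv:2306.03685 — 9 statements merged into one kernel-verified Lean document; each statement's English description precedes it below -/
import Mathlib

section
/- The permutation π of Z_n defined by π((αd_k+i)s+j) = jk - i - αd_sd_k (where 0 ≤ j < d_s, 0 ≤ i < d_k, 0 ≤ α < n/(d_sd_k), and every x ∈ Z_n has a unique such representation) is injective, i.e., a bijection of Z_n. -/
/-!
Both index maps `(α, i, j) ↦ (α d_k + i) s + j` and `(α, i, j) ↦ j k - i - α d_s d_k` are
injective on the box `[0, n / (d_s d_k)) × [0, d_k) × [0, d_s)`, which has `n` points, so both are
bijections onto `ZMod n` and `π` is the second composed with the inverse of the first.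
Injectivity is read off digit by digit: reducing modulo a divisor of `n` that divides every other
term isolates one digit, and cancelling a factor `c` from a congruence modulo `n` divides the
modulus by `gcd n c`. For the second map the digit `j` is recovered because `d_s` divides
`n / d_k`, which is coprime to `k / d_k`.
-/

/-- The circular (Lee) distance between two elements of `ZMod n`. -/
def circDist (n : ℕ) (i j : ZMod n) : ℕ := min (i - j).val (j - i).val

/-- A permutation of `ZMod n` is `(s,k)`-clash-free if it moves every pair of
distinct elements at distance less than `s` to a pair at distance at least `k`. -/
def ClashFree (n s k : ℕ) (π : Equiv.Perm (ZMod n)) : Prop :=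
  ∀ i j : ZMod n, i ≠ j → circDist n i j < s → k ≤ circDist n (π i) (π j)

theorem natCast_eq_of_mul_add_modEq {m c x x' : ℤ} {d a a' : ℕ} (hdm : (d : ℤ) ∣ m)
    (hdc : (d : ℤ) ∣ c) (ha : a < d) (ha' : a' < d) (h : x * c + a ≡ x' * c + a' [ZMOD m]) :
    a = a' := by
  have hdrop (y b : ℤ) : y * c + b ≡ b [ZMOD d] :=
    Int.modEq_iff_dvd.mpr (by simpa using (hdc.mul_left y).neg_right)
  have hd : (a : ℤ) ≡ a' [ZMOD d] := (hdrop x a).symm.trans ((h.of_dvd hdm).trans (hdrop x' a'))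
  exact (Int.natCast_modEq_iff.mp hd).eq_of_lt_of_lt ha ha'

theorem eq_and_eq_of_mul_add_modEq {N b x x' a a' : ℕ} (hx : x < N) (hx' : x' < N) (ha : a < b)
    (ha' : a' < b) (h : (x * b + a : ℤ) ≡ x' * b + a' [ZMOD N * b]) : x = x' ∧ a = a' := by
  obtain rfl := natCast_eq_of_mul_add_modEq (dvd_mul_left _ _) dvd_rfl ha ha' h
  have hmod : (x : ℤ) ≡ x' [ZMOD N] := (h.add_right_cancel' _).mul_right_cancel' (by omega)
  exact ⟨(Int.natCast_modEq_iff.mp hmod).eq_of_lt_of_lt hx hx', rfl⟩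

theorem injective_natCast_mul_add_mul_add {n N b s : ℕ} [NeZero n] (hn : N * b * n.gcd s = n) :
    Function.Injective fun x : Fin N × Fin b × Fin (n.gcd s) =>
      (((x.1 * b + x.2.1) * s + x.2.2 : ℕ) : ZMod n) := by
  rintro ⟨α, i, j⟩ ⟨α', i', j'⟩ h
  replace h : ((α * b + i : ℕ) : ℤ) * s + (j : ℕ) ≡ ((α' * b + i' : ℕ) : ℤ) * s + (j' : ℕ)
      [ZMOD n] := by
    rw [ZMod.natCast_eq_natCast_iff, ← Int.natCast_modEq_iff] at h
    exact_mod_cast h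
  have hj := natCast_eq_of_mul_add_modEq (Int.natCast_dvd_natCast.mpr (n.gcd_dvd_left s))
    (Int.natCast_dvd_natCast.mpr (n.gcd_dvd_right s)) j.isLt j'.isLt h
  rw [hj] at h
  have hαi := (h.add_right_cancel' _).cancel_right_div_gcd (by exact_mod_cast NeZero.pos n)
  rw [Int.gcd_natCast_natCast, ← Int.natCast_div,
    Nat.div_eq_of_eq_mul_left (Nat.gcd_pos_of_pos_left s (NeZero.pos n)) hn.symm] at hαi
  push_cast at hαi
  obtain ⟨hα, hi⟩ := eq_and_eq_of_mul_add_modEq α.isLt α'.isLt i.isLt i'.isLt hαi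
  simp [Fin.ext_iff, hα, hi, hj]

theorem injective_natCast_mul_sub_sub_mul {n N c k : ℕ} [NeZero n] (hn : N * c * n.gcd k = n) :
    Function.Injective fun x : Fin N × Fin (n.gcd k) × Fin c =>
      ((x.2.2 * k : ℕ) : ZMod n) - ((x.2.1 : ℕ) : ZMod n)
        - ((x.1 * (c * n.gcd k) : ℕ) : ZMod n) := by
  rintro ⟨α, i, j⟩ ⟨α', i', j'⟩ h
  have hb : 0 < n.gcd k := Nat.gcd_pos_of_pos_left k (NeZero.pos n)
  have hc : c ≠ 0 := by rintro rfl; exact NeZero.ne n (by simpa using hn.symm)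
  obtain ⟨k', hk⟩ := n.gcd_dvd_right k
  -- negating both sides makes `i` the lowest digit in base `gcd n k`
  replace h : ((α : ℤ) * c - j * k') * n.gcd k + (i : ℕ)
      ≡ ((α' : ℤ) * c - j' * k') * n.gcd k + (i' : ℕ) [ZMOD N * c * n.gcd k] := by
    have hkn : (k : ZMod n) = n.gcd k * k' := by
      exact_mod_cast congrArg (Nat.cast : ℕ → ZMod n) hk
    rw [← Nat.cast_mul, ← Nat.cast_mul, hn]
    refine (ZMod.intCast_eq_intCast_iff _ _ _).mp ?_
    push_cast at h ⊢
    linear_combination -h + ((j : ZMod n) - j') * hkn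
  have hi := natCast_eq_of_mul_add_modEq (dvd_mul_left _ _) dvd_rfl i.isLt i'.isLt h
  rw [hi] at h
  have hαj := (h.add_right_cancel' _).mul_right_cancel' (by exact_mod_cast hb.ne')
  have hjk : (j : ℤ) * k' ≡ j' * k' [ZMOD c] := by
    have := hαj.of_mul_left N
    rw [Int.modEq_iff_dvd] at this ⊢
    have e : (j' : ℤ) * k' - j * k'
        = ((α' : ℤ) - α) * c - ((α' * c - j' * k') - (α * c - j * k')) := by ring
    rw [e]; exact dvd_sub (dvd_mul_left _ _) this
  have hcop : Nat.Coprime c k' := by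
    have := Nat.coprime_div_gcd_div_gcd (m := n) (n := k) hb
    rw [Nat.div_eq_of_eq_mul_left hb hn.symm,
      Nat.div_eq_of_eq_mul_left hb (hk.trans (mul_comm _ _))] at this
    exact this.coprime_dvd_left (dvd_mul_left _ _)
  have hj : (j : ℕ) = j' := (Nat.ModEq.cancel_right_of_coprime hcop
    (Int.natCast_modEq_iff.mp (by exact_mod_cast hjk))).eq_of_lt_of_lt j.isLt j'.isLt
  rw [hj] at hαj
  have hα : (α : ℤ) ≡ α' [ZMOD N] := by
    refine Int.ModEq.mul_right_cancel' (c := c) (by exact_mod_cast hc) ?_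
    simpa using hαj.add_right ((j' : ℕ) * k' : ℤ)
  have hα' : (α : ℕ) = α' := (Int.natCast_modEq_iff.mp hα).eq_of_lt_of_lt α.isLt α'.isLt
  simp [Fin.ext_iff, hα', hi, hj]

theorem exists_perm_apply_eq_of_injective {α β : Type*} [Fintype α] [Fintype β] {g f : α → β}
    (hg : Function.Injective g) (hf : Function.Injective f)
    (hcard : Fintype.card α = Fintype.card β) : ∃ π : Equiv.Perm β, ∀ x, π (g x) = f x := by
  let eg := Equiv.ofBijective g ((Fintype.bijective_iff_injective_and_card g).mpr ⟨hg, hcard⟩)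
  let ef := Equiv.ofBijective f ((Fintype.bijective_iff_injective_and_card f).mpr ⟨hf, hcard⟩)
  exact ⟨eg.symm.trans ef, fun x => congrArg ef (eg.symm_apply_apply x)⟩

theorem stmt_0_general (n k s : ℕ) (hkn : k < n)
    (hdvd : Nat.gcd n s * Nat.gcd n k ∣ n) :
    ∃ π : Equiv.Perm (ZMod n),
      ∀ α i j : ℕ,
        α < n / (Nat.gcd n s * Nat.gcd n k) →
        i < Nat.gcd n k → j < Nat.gcd n s →
        π (((α * Nat.gcd n k + i) * s + j : ℕ) : ZMod n)
          = ((j * k : ℕ) : ZMod n) - (i : ZMod n)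
            - ((α * (Nat.gcd n s * Nat.gcd n k) : ℕ) : ZMod n) := by
  have : NeZero n := ⟨by omega⟩
  have hN : n / (n.gcd s * n.gcd k) * n.gcd s * n.gcd k = n := by
    rw [mul_assoc]; exact Nat.div_mul_cancel hdvd
  obtain ⟨π, hπ⟩ := exists_perm_apply_eq_of_injective
    (injective_natCast_mul_add_mul_add (s := s) (by rw [mul_right_comm]; exact hN))
    (injective_natCast_mul_sub_sub_mul (k := k) hN)
    (by simp only [Fintype.card_prod, Fintype.card_fin, ZMod.card]; linarith)
  exact ⟨π, fun α i j hα hi hj => hπ (⟨α, hα⟩, ⟨i, hi⟩, ⟨j, hj⟩)⟩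

/-- The map `(α d_k + i) s + j ↦ j k - i - α d_s d_k` is a bijection of `ZMod n`. -/
theorem stmt_0 (n k s r : ℕ) (hk : 0 < k) (hkn : k < n)
    (hs : s = (n - 1) / k) (hn : n = s * k + r) (hr1 : 1 ≤ r)
    (hrk : r < k) (hrs : r < s)
    (hdvd : Nat.gcd n s * Nat.gcd n k ∣ n) :
    ∃ π : Equiv.Perm (ZMod n),
      ∀ α i j : ℕ,
        α < n / (Nat.gcd n s * Nat.gcd n k) →
        i < Nat.gcd n k → j < Nat.gcd n s →
        π (((α * Nat.gcd n k + i) * s + j : ℕ) : ZMod n)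
          = ((j * k : ℕ) : ZMod n) - (i : ZMod n)
            - ((α * (Nat.gcd n s * Nat.gcd n k) : ℕ) : ZMod n) :=
  stmt_0_general n k s hkn hdvd
end

section
/- Every x ∈ Z_n has a unique representation x = (αd_k + i)s + j mod n with j ∈ {0,...,d_s-1}, i ∈ {0,...,d_k-1}, and α ∈ {0,...,n/(d_sd_k)-1}. -/
/-!
Since `d_s ∣ s` and `d_s ∣ n`, reducing mod `d_s` recovers `j`; then `m ↦ m s` is injective on
`m < n / d_s` because `n / d_s` and `s / d_s` are coprime, and `m = α d_k + i` recovers `α` and `i`.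
So `(α, i, j) ↦ (α d_k + i) s + j` is injective on a box of exactly `n` triples, hence bijective
onto `ZMod n`.
-/

open Finset

theorem ZMod.injOn_natCast_mul_Iio_div_gcd {n : ℕ} (hn : 0 < n) (s : ℕ) :
    Set.InjOn (fun m : ℕ => ((m * s : ℕ) : ZMod n)) (Set.Iio (n / n.gcd s)) :=
  fun _ hm _ hm' h =>
    (((ZMod.natCast_eq_natCast_iff _ _ _).1 h).cancel_right_div_gcd hn).eq_of_lt_of_lt hm hm'

theorem ZMod.eq_of_natCast_mul_add_eq {n s d m m' j j' : ℕ} (hdn : d ∣ n) (hds : d ∣ s)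
    (hj : j < d) (hj' : j' < d)
    (h : ((m * s + j : ℕ) : ZMod n) = ((m' * s + j' : ℕ) : ZMod n)) :
    j = j' ∧ ((m * s : ℕ) : ZMod n) = ((m' * s : ℕ) : ZMod n) := by
  have hmod : m * s + j ≡ m' * s + j' [MOD d] :=
    ((ZMod.natCast_eq_natCast_iff _ _ _).1 h).of_dvd hdn
  have hjj' : j ≡ j' [MOD d] := by
    have hmul : ∀ m, m * s ≡ 0 [MOD d] :=
      fun m => Nat.modEq_zero_iff_dvd.2 (dvd_mul_of_dvd_right hds m)
    simpa using ((hmul m).add_right j).symm.trans (hmod.trans ((hmul m').add_right j'))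
  obtain rfl := hjj'.eq_of_lt_of_lt hj hj'
  push_cast at h ⊢
  exact ⟨rfl, add_right_cancel h⟩

theorem Nat.eq_and_eq_of_mul_add_eq_mul_add {d a b i j : ℕ} (hi : i < d) (hj : j < d)
    (h : a * d + i = b * d + j) : a = b ∧ i = j := by
  have hd : 0 < d := by omega
  have hdiv := congrArg (· / d) h
  have hmod := congrArg (· % d) h
  simp only [Nat.add_comm (_ * d), Nat.add_mul_div_right _ _ hd, Nat.div_eq_of_lt hi,
    Nat.div_eq_of_lt hj, Nat.add_mul_mod_self_right, Nat.mod_eq_of_lt hi,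
    Nat.mod_eq_of_lt hj] at hdiv hmod
  omega

theorem Finset.existsUnique_of_injOn_of_card_eq {α β : Type*} [Fintype β] {S : Finset α}
    {f : α → β} (hf : Set.InjOn f S) (hcard : #S = Fintype.card β) (y : β) :
    ∃! x, x ∈ S ∧ y = f x := by
  obtain ⟨x, hx, rfl⟩ := surjOn_of_injOn_of_card_le (t := univ) f (fun _ _ => mem_univ _) hf
    (by rw [card_univ, hcard]) (mem_univ y)
  exact ⟨x, ⟨hx, rfl⟩, fun x' ⟨hx', he⟩ => hf hx' hx he.symm⟩

theorem stmt_1_general (n s k : ℕ) (hn : 0 < n)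
    (hdvd : Nat.gcd n s * Nat.gcd n k ∣ n) :
    ∀ x : ZMod n, ∃! t : ℕ × ℕ × ℕ,
      t.1 < n / (Nat.gcd n s * Nat.gcd n k) ∧
      t.2.1 < Nat.gcd n k ∧ t.2.2 < Nat.gcd n s ∧
      x = (((t.1 * Nat.gcd n k + t.2.1) * s + t.2.2 : ℕ) : ZMod n) := by
  have : NeZero n := ⟨hn.ne'⟩
  set ds := n.gcd s
  set dk := n.gcd k
  set A := n / (ds * dk)
  have hn_eq : n = ds * (dk * A) := by rw [← mul_assoc, Nat.mul_div_cancel' hdvd]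
  have hquot : n / ds = dk * A := by
    rw [hn_eq, Nat.mul_div_cancel_left _ (Nat.gcd_pos_of_pos_left s hn)]
  have hm_lt : ∀ {a i}, a < A → i < dk → a * dk + i < n / ds := fun ha hi => by
    rw [hquot]; nlinarith
  have hinj : Set.InjOn (fun t : ℕ × ℕ × ℕ => (((t.1 * dk + t.2.1) * s + t.2.2 : ℕ) : ZMod n))
      (range A ×ˢ range dk ×ˢ range ds : Finset _) := by
    rintro ⟨a, i, j⟩ h ⟨a', i', j'⟩ h' he
    simp only [coe_product, Set.mem_prod, coe_range, Set.mem_Iio] at h h'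
    obtain ⟨rfl, hms⟩ := ZMod.eq_of_natCast_mul_add_eq (Nat.gcd_dvd_left n s)
      (Nat.gcd_dvd_right n s) h.2.2 h'.2.2 he
    obtain ⟨rfl, rfl⟩ := Nat.eq_and_eq_of_mul_add_eq_mul_add h.2.1 h'.2.1 <|
      ZMod.injOn_natCast_mul_Iio_div_gcd hn s (hm_lt h.1 h.2.1) (hm_lt h'.1 h'.2.1) hms
    rfl
  have hcard : #(range A ×ˢ range dk ×ˢ range ds) = Fintype.card (ZMod n) := by
    rw [ZMod.card, hn_eq, card_product, card_product, card_range, card_range, card_range]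
    ring
  intro x
  simpa only [mem_product, mem_range, and_assoc] using
    existsUnique_of_injOn_of_card_eq hinj hcard x

/-- Every `x ∈ ZMod n` has a unique representation
`x = (α d_k + i) s + j` with `j < d_s`, `i < d_k`, `α < n/(d_s d_k)`. -/
theorem stmt_1 (n s k : ℕ) (hn : 0 < n) (hs : 0 < s) (hk : 0 < k)
    (hsn : s < n) (hkn : k < n)
    (hdvd : Nat.gcd n s * Nat.gcd n k ∣ n) :
    ∀ x : ZMod n, ∃! t : ℕ × ℕ × ℕ,
      t.1 < n / (Nat.gcd n s * Nat.gcd n k) ∧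
      t.2.1 < Nat.gcd n k ∧ t.2.2 < Nat.gcd n s ∧
      x = (((t.1 * Nat.gcd n k + t.2.1) * s + t.2.2 : ℕ) : ZMod n) :=
  stmt_1_general n s k hn hdvd
end

section
/- If π is an (s,k)-clash-free permutation of Z_n (with n = sk + r, 1 ≤ r < s, r < k, s = ⌊(n-1)/k⌋), then in the associated packing of n rectangles of size s×k on the n×n torus (rectangle R_i covering cells (i+x, π(i)+y) for 0 ≤ x < s, 0 ≤ y < k), every column of the torus contains exactly r cells not covered by any rectangle. -/
/-- Cell `(x,y)` of the torus is covered by the rectangle of `i`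
(the `s × k` rectangle with lower-left corner `(i, π i)`). -/
def CoveredBy (n s k : ℕ) (π : Equiv.Perm (ZMod n)) (x y i : ZMod n) : Prop :=
  ∃ a b : ℕ, a < s ∧ b < k ∧ x = i + (a : ZMod n) ∧ y = π i + (b : ZMod n)

/-!
In column `x` only the rectangles `R_{x-a}` with `a < s` can appear, and `R_{x-a}` covers
there the `k` cells `π (x - a) + b` with `b < k`. Any two of these starting points `x - a`
are at distance less than `s`, so clash-freeness puts their images `π (x - a)` at distance at
least `k`, and the `s` vertical segments of length `k` are pairwise disjoint. Hence each
column has exactly `s * k` covered cells and `n - s * k = r` free ones.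
-/

lemma circDist_comm (n : ℕ) (i j : ZMod n) : circDist n i j = circDist n j i :=
  min_comm _ _

lemma circDist_add_natCast_lt {n m a b : ℕ} (u : ZMod n) (ha : a < m) (hb : b < m) :
    circDist n (u + a) (u + b) < m := by
  wlog hab : a ≤ b generalizing a b
  · rw [circDist_comm]
    exact this hb ha (by omega)
  have hsub : u + (b : ZMod n) - (u + a) = ((b - a : ℕ) : ZMod n) := by
    rw [Nat.cast_sub hab]
    ring
  calc circDist n (u + a) (u + b) ≤ (u + (b : ZMod n) - (u + a)).val := min_le_right _ _
    _ = (b - a) % n := by rw [hsub, ZMod.val_natCast]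
    _ ≤ b - a := Nat.mod_le _ _
    _ < m := by omega

lemma add_natCast_ne_of_le_circDist {n k b b' : ℕ} {u v : ZMod n}
    (h : k ≤ circDist n u v) (hb : b < k) (hb' : b' < k) : u + b ≠ v + b' := by
  intro heq
  have hv : v = u - b' + b := by linear_combination -heq
  have hlt := circDist_add_natCast_lt (u - (b' : ZMod n)) hb' hb
  rw [sub_add_cancel, ← hv] at hlt
  omega

def columnCells (n s k : ℕ) (π : Equiv.Perm (ZMod n)) (x : ZMod n) :
    Finset (ZMod n) :=
  (Finset.range s ×ˢ Finset.range k).image fun p => π (x - p.1) + p.2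

lemma exists_coveredBy_iff_mem_columnCells {n s k : ℕ} (π : Equiv.Perm (ZMod n))
    (x y : ZMod n) : (∃ i, CoveredBy n s k π x y i) ↔ y ∈ columnCells n s k π x := by
  simp only [columnCells, CoveredBy, Finset.mem_image, Finset.mem_product, Finset.mem_range,
    Prod.exists]
  constructor
  · rintro ⟨i, a, b, ha, hb, rfl, rfl⟩
    exact ⟨a, b, ⟨ha, hb⟩, by rw [add_sub_cancel_right]⟩
  · rintro ⟨a, b, ⟨ha, hb⟩, rfl⟩
    exact ⟨x - a, a, b, ha, hb, (sub_add_cancel x _).symm, rfl⟩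

lemma ClashFree.injOn_column {n s k : ℕ} {π : Equiv.Perm (ZMod n)} (hcf : ClashFree n s k π)
    (hs : s ≤ n) (hk : k ≤ n) (x : ZMod n) :
    Set.InjOn (fun p : ℕ × ℕ => π (x - p.1) + p.2)
      (↑(Finset.range s ×ˢ Finset.range k) : Set (ℕ × ℕ)) := by
  rintro ⟨a, b⟩ hab ⟨a', b'⟩ hab' heq
  simp only [Finset.coe_product, Finset.coe_range, Set.mem_prod, Set.mem_Iio] at hab hab'
  have ha : a = a' := by
    by_contra hne
    have hij : x - (a : ZMod n) ≠ x - a' := fun h =>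
      hne (CharP.natCast_injOn_Iio (ZMod n) n (by simp; omega) (by simp; omega)
        (sub_right_injective h))
    have hdist : circDist n (x - a) (x - a') < s := by
      have := circDist_add_natCast_lt (x - (a : ZMod n) - (a' : ZMod n)) hab'.1 hab.1
      rwa [sub_add_cancel, sub_right_comm, sub_add_cancel] at this
    exact add_natCast_ne_of_le_circDist (hcf _ _ hij hdist) hab.2 hab'.2 heq
  subst ha
  have hb : b = b' := CharP.natCast_injOn_Iio (ZMod n) n (by simp; omega) (by simp; omega)
    (add_left_cancel heq)
  rw [hb]

lemma ClashFree.card_columnCells {n s k : ℕ} {π : Equiv.Perm (ZMod n)}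
    (hcf : ClashFree n s k π) (hsk : s * k ≤ n) (x : ZMod n) :
    (columnCells n s k π x).card = s * k := by
  obtain rfl | hs := Nat.eq_zero_or_pos s
  · simp [columnCells]
  obtain rfl | hk := Nat.eq_zero_or_pos k
  · simp [columnCells]
  rw [columnCells, Finset.card_image_of_injOn
    (hcf.injOn_column (by nlinarith) (by nlinarith) x), Finset.card_product,
    Finset.card_range, Finset.card_range]

lemma ClashFree.ncard_uncovered_column {n s k : ℕ} [NeZero n] {π : Equiv.Perm (ZMod n)}
    (hcf : ClashFree n s k π) (hsk : s * k ≤ n) (x : ZMod n) :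
    {y : ZMod n | ¬ ∃ i : ZMod n, CoveredBy n s k π x y i}.ncard = n - s * k := by
  have hfree : {y : ZMod n | ¬ ∃ i : ZMod n, CoveredBy n s k π x y i} =
      (↑(columnCells n s k π x) : Set (ZMod n))ᶜ := by
    ext y
    simp [exists_coveredBy_iff_mem_columnCells]
  rw [hfree, Set.ncard_compl, Nat.card_zmod, Set.ncard_coe_finset, hcf.card_columnCells hsk]

theorem stmt_2_general (n s k r : ℕ)
    (hn : n = s * k + r) (hr1 : 1 ≤ r)
    (π : Equiv.Perm (ZMod n)) (hcf : ClashFree n s k π) :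
    ∀ x : ZMod n,
      {y : ZMod n | ¬ ∃ i : ZMod n, CoveredBy n s k π x y i}.ncard = r := by
  have : NeZero n := ⟨by omega⟩
  intro x
  rw [hcf.ncard_uncovered_column (by omega) x]
  omega

/-- Every column of the torus packing contains exactly `r` free cells. -/
theorem stmt_2 (n s k r : ℕ) (hk : 0 < k) (hs : s = (n - 1) / k)
    (hn : n = s * k + r) (hr1 : 1 ≤ r) (hrs : r < s) (hrk : r < k)
    (π : Equiv.Perm (ZMod n)) (hcf : ClashFree n s k π) :
    ∀ x : ZMod n,
      {y : ZMod n | ¬ ∃ i : ZMod n, CoveredBy n s k π x y i}.ncard = r :=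
  stmt_2_general n s k r hn hr1 π hcf
end

section
/- If π is an (s,k)-clash-free permutation of Z_n (with n = sk + r, 1 ≤ r < s, r < k), then every row of the associated torus packing contains exactly r cells not covered by any rectangle. -/
/-!
A row `y` meets the rectangle of `i` exactly when `π i = y - b` for some `b < k`, and then in the
`s` cells `i + a`, `a < s`; so the cells of row `y` covered with multiplicity are parametrised by
`(a, b) ∈ Fin s × Fin k`. Clash-freeness makes this parametrisation injective: if two rectangles
meeting row `y` share a cell, their columns are at distance `< s` and their rows at distance `< k`.
Hence exactly `s * k` of the `n` cells of the row are covered and `n - s * k = r` are free.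
-/

lemma natCast_inj_of_lt {n a b : ℕ} (ha : a < n) (hb : b < n)
    (h : (a : ZMod n) = b) : a = b := by
  simpa only [ZMod.val_natCast_of_lt ha, ZMod.val_natCast_of_lt hb] using congrArg ZMod.val h

lemma circDist_lt_of_add_natCast_eq {n s : ℕ} (hs : s ≤ n) {i j : ZMod n} {a b : ℕ}
    (ha : a < s) (hb : b < s) (h : i + (a : ZMod n) = j + (b : ZMod n)) :
    circDist n i j < s := by
  rcases le_total a b with hab | hab
  · have hval : (i - j).val = b - a := by
      rw [← ZMod.val_natCast_of_lt (n := n) (by omega : b - a < n), Nat.cast_sub hab]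
      congr 1
      linear_combination h
    exact (min_le_left _ _).trans_lt (by omega)
  · have hval : (j - i).val = a - b := by
      rw [← ZMod.val_natCast_of_lt (n := n) (by omega : a - b < n), Nat.cast_sub hab]
      congr 1
      linear_combination -h
    exact (min_le_right _ _).trans_lt (by omega)

section RowCover

variable {n s k : ℕ} (π : Equiv.Perm (ZMod n)) (y : ZMod n)

def rowCover (p : Fin s × Fin k) : ZMod n :=
  π.symm (y - (p.2 : ℕ)) + ((p.1 : ℕ) : ZMod n)

lemma range_rowCover :
    Set.range (rowCover (s := s) (k := k) π y) = {x | ∃ i, CoveredBy n s k π x y i} := by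
  ext x
  constructor
  · rintro ⟨⟨a, b⟩, rfl⟩
    refine ⟨π.symm (y - (b : ℕ)), a, b, a.isLt, b.isLt, rfl, ?_⟩
    rw [π.apply_symm_apply]
    ring
  · rintro ⟨i, a, b, ha, hb, rfl, rfl⟩
    refine ⟨(⟨a, ha⟩, ⟨b, hb⟩), ?_⟩
    simp only [rowCover, add_sub_cancel_right, Equiv.symm_apply_apply]

lemma rowCover_injective (hsn : s ≤ n) (hkn : k ≤ n) (hcf : ClashFree n s k π) :
    Function.Injective (rowCover (s := s) (k := k) π y) := by
  rintro ⟨a, b⟩ ⟨a', b'⟩ h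
  set i := π.symm (y - (b : ℕ))
  set j := π.symm (y - (b' : ℕ))
  have hcol : i + ((a : ℕ) : ZMod n) = j + ((a' : ℕ) : ZMod n) := h
  have hrow : π i + ((b : ℕ) : ZMod n) = π j + ((b' : ℕ) : ZMod n) := by
    simp only [i, j, Equiv.apply_symm_apply, sub_add_cancel]
  have hij : i = j := by
    by_contra hne
    have := hcf i j hne (circDist_lt_of_add_natCast_eq hsn a.isLt a'.isLt hcol)
    have := circDist_lt_of_add_natCast_eq hkn b.isLt b'.isLt hrow
    omega
  rw [hij, add_right_inj] at hcol hrow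
  exact Prod.ext (Fin.ext (natCast_inj_of_lt (by omega) (by omega) hcol))
    (Fin.ext (natCast_inj_of_lt (by omega) (by omega) hrow))

lemma ncard_covered_row (hsn : s ≤ n) (hkn : k ≤ n) (hcf : ClashFree n s k π) :
    {x | ∃ i, CoveredBy n s k π x y i}.ncard = s * k := by
  rw [← range_rowCover, Set.ncard_range_of_injective (rowCover_injective π y hsn hkn hcf),
    Nat.card_eq_fintype_card, Fintype.card_prod, Fintype.card_fin, Fintype.card_fin]

lemma ncard_free_row [NeZero n] (hsn : s ≤ n) (hkn : k ≤ n) (hcf : ClashFree n s k π) :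
    {x | ¬ ∃ i, CoveredBy n s k π x y i}.ncard = n - s * k := by
  have := Set.ncard_add_ncard_compl {x | ∃ i, CoveredBy n s k π x y i}
  rw [ncard_covered_row π y hsn hkn hcf, Nat.card_zmod] at this
  exact (Nat.sub_eq_of_eq_add' this.symm).symm

end RowCover

theorem stmt_3_general (n s k r : ℕ) (hk : 0 < k)
    (hn : n = s * k + r) (hrs : r < s)
    (π : Equiv.Perm (ZMod n)) (hcf : ClashFree n s k π) :
    ∀ y : ZMod n,
      {x : ZMod n | ¬ ∃ i : ZMod n, CoveredBy n s k π x y i}.ncard = r := by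
  intro y
  have hsn : s ≤ n := hn ▸ (Nat.le_mul_of_pos_right s hk).trans (Nat.le_add_right _ _)
  have hkn : k ≤ n := hn ▸ (Nat.le_mul_of_pos_left k (by omega)).trans (Nat.le_add_right _ _)
  have : NeZero n := ⟨by omega⟩
  rw [ncard_free_row π y hsn hkn hcf]
  omega

/-- Every row of the torus packing contains exactly `r` free cells. -/
theorem stmt_3 (n s k r : ℕ) (hk : 0 < k)
    (hn : n = s * k + r) (hr1 : 1 ≤ r) (hrs : r < s) (hrk : r < k)
    (π : Equiv.Perm (ZMod n)) (hcf : ClashFree n s k π) :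
    ∀ y : ZMod n,
      {x : ZMod n | ¬ ∃ i : ZMod n, CoveredBy n s k π x y i}.ncard = r :=
  stmt_3_general n s k r hk hn hrs π hcf
end

section
/- Suppose π is an (s,k)-clash-free permutation of Z_n with n = sk + r, 1 ≤ r < s, r < k. For every i ∈ Z_n there exists exactly one j ∈ Z_n such that R_j touches the right edge of R_i, that is, exactly one j ∈ Z_n with (j-i) mod n = s and ||π(i),π(j)||_n < k. -/
/-- Exactly one rectangle touches the right edge of each rectangle: for each `i`
there is exactly one `j` with `(j - i) mod n = s` and `‖π i, π j‖ < k`. -/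
theorem stmt_5 (n s k r : ℕ) (hk : 0 < k)
    (hn : n = s * k + r) (hr1 : 1 ≤ r) (hrs : r < s) (hrk : r < k)
    (π : Equiv.Perm (ZMod n)) (hcf : ClashFree n s k π) :
    ∀ i : ZMod n, ∃! j : ZMod n,
      (j - i).val = s ∧ circDist n (π i) (π j) < k := by
  have hn0 : 0 < n := by nlinarith
  haveI : NeZero n := ⟨hn0.ne'⟩
  have hk2 : 2 ≤ k := by omega
  have h2s : 2 * s < n := by nlinarith
  have hsn : s < n := by omega
  have hkn : k < n := by nlinarith
  intro i
  -- key existence fact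
  have key : circDist n (π i) (π (i + (s : ZMod n))) < k := by
    by_contra hge
    push_neg at hge
    -- distances between images of i+u and i+v, u < v ≤ s, are all ≥ k
    have hdist : ∀ u v : ℕ, u < v → v ≤ s →
        k ≤ circDist n (π (i + (u : ZMod n))) (π (i + (v : ZMod n))) := by
      intro u v huv hvs
      have hsub : (i + (v : ZMod n)) - (i + (u : ZMod n)) = ((v - u : ℕ) : ZMod n) := by
        push_cast [Nat.cast_sub huv.le]
        ring
      have hval : ((i + (v : ZMod n)) - (i + (u : ZMod n))).val = v - u := by
        rw [hsub, ZMod.val_natCast, Nat.mod_eq_of_lt (by omega)]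
      have hne : i + (u : ZMod n) ≠ i + (v : ZMod n) := by
        intro h
        have : ((i + (v : ZMod n)) - (i + (u : ZMod n))).val = 0 := by
          rw [h]; simp
        omega
      have hvalneg : ((i + (u : ZMod n)) - (i + (v : ZMod n))).val = n - (v - u) := by
        have h1 : (i + (u : ZMod n)) - (i + (v : ZMod n)) =
            -((i + (v : ZMod n)) - (i + (u : ZMod n))) := by ring
        have hnz : ((i + (v : ZMod n)) - (i + (u : ZMod n))) ≠ 0 := by
          intro h; rw [h] at hval; simp at hval; omega
        rw [h1, ZMod.neg_val, if_neg hnz, hval]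
      rcases eq_or_lt_of_le hvs with hveq | hvlt
      · -- v = s; then u = 0 unless v - u < s
        rcases Nat.eq_or_lt_of_le (Nat.one_le_iff_ne_zero.mpr (by omega) : 1 ≤ v - u) with _ | _
        all_goals {
          by_cases hu0 : u = 0
          · subst hu0; subst hveq
            simpa using hge
          · have hlt : v - u < s := by omega
            have : circDist n (i + (u : ZMod n)) (i + (v : ZMod n)) < s := by
              unfold circDist
              rw [hval, hvalneg]
              omega
            exact hcf _ _ hne this }
      · have hlt : v - u < s := by omega
        have : circDist n (i + (u : ZMod n)) (i + (v : ZMod n)) < s := by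
          unfold circDist
          rw [hval, hvalneg]
          omega
        exact hcf _ _ hne this
    -- build the s+1 pairwise disjoint intervals of length k
    set f : ℕ → Finset (ZMod n) :=
      fun u => (Finset.range k).image (fun t : ℕ => π (i + (u : ZMod n)) + (t : ZMod n)) with hf
    have hcard : ∀ u, (f u).card = k := by
      intro u
      rw [hf]
      rw [Finset.card_image_of_injOn, Finset.card_range]
      intro t ht t' ht' h
      simp only [Finset.coe_range, Set.mem_Iio] at ht ht'
      have h2 : (t : ZMod n) = (t' : ZMod n) := add_left_cancel h
      have h3 := congrArg ZMod.val h2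
      rwa [ZMod.val_natCast, ZMod.val_natCast, Nat.mod_eq_of_lt (by omega),
        Nat.mod_eq_of_lt (by omega)] at h3
    have hdisj : ∀ u ∈ Finset.range (s + 1), ∀ v ∈ Finset.range (s + 1), u ≠ v →
        Disjoint (f u) (f v) := by
      have main : ∀ u v : ℕ, u < v → v ≤ s → Disjoint (f u) (f v) := by
        intro u v huv hvs
        have hd := hdist u v huv hvs
        rw [Finset.disjoint_left]
        intro x hxu hxv
        simp only [hf, Finset.mem_image, Finset.mem_range] at hxu hxv
        obtain ⟨t, ht, hxt⟩ := hxu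
        obtain ⟨t', ht', hxt'⟩ := hxv
        set a := π (i + (u : ZMod n))
        set b := π (i + (v : ZMod n))
        have hab : a + (t : ZMod n) = b + (t' : ZMod n) := by rw [hxt, hxt']
        unfold circDist at hd
        rcases le_or_gt t t' with hle | hlt
        · have : a - b = ((t' - t : ℕ) : ZMod n) := by
            push_cast [Nat.cast_sub hle]
            linear_combination hab
          have hv2 : (a - b).val = t' - t := by
            rw [this, ZMod.val_natCast, Nat.mod_eq_of_lt (by omega)]
          omega
        · have : b - a = ((t - t' : ℕ) : ZMod n) := by
            push_cast [Nat.cast_sub hlt.le]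
            linear_combination -hab
          have hv2 : (b - a).val = t - t' := by
            rw [this, ZMod.val_natCast, Nat.mod_eq_of_lt (by omega)]
          omega
      intro u hu v hv huv
      rcases lt_or_gt_of_ne huv with h | h
      · exact main u v h (by simpa using Nat.lt_succ_iff.mp (Finset.mem_range.mp hv))
      · exact (main v u h (by simpa using Nat.lt_succ_iff.mp (Finset.mem_range.mp hu))).symm
    have hbig : ((Finset.range (s + 1)).biUnion f).card = (s + 1) * k := by
      rw [Finset.card_biUnion hdisj]
      simp [hcard, Finset.sum_const]
    have hle : ((Finset.range (s + 1)).biUnion f).card ≤ n := by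
      have := Finset.card_le_univ ((Finset.range (s + 1)).biUnion f)
      simpa [ZMod.card] using this
    nlinarith
  refine ⟨i + (s : ZMod n), ⟨?_, key⟩, ?_⟩
  · have : (i + (s : ZMod n)) - i = ((s : ℕ) : ZMod n) := by ring
    rw [this, ZMod.val_natCast, Nat.mod_eq_of_lt hsn]
  · rintro j ⟨hj, -⟩
    have h1 : ((j - i).val : ZMod n) = ((s : ℕ) : ZMod n) := by rw [hj]
    rw [ZMod.natCast_val, ZMod.cast_id] at h1
    have : j - i = (s : ZMod n) := h1
    linear_combination this
end

section
/- With n = sk + r, d_s = gcd(n,s), d_k = gcd(n,k), d_sd_k | n, and ((a_i),(b_i)) an (s,k,n)-jumper with σ_a = Σ_{i=0}^{d_s-1} a_i and σ_b = Σ_{i=0}^{d_k-1} b_i, we have gcd(n/(d_sd_k), σ_b/(d_sd_k)) = 1. -/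
/-- An `(s,k,n)`-jumper: a pair of sequences `(aSeq, bSeq)` with periods
dividing `d_s = gcd(n,s)` and `d_k = gcd(n,k)` respectively, entries in
`[1,s)` resp. `[1,k)`, distinct partial sums modulo `d_s` resp. `d_k`,
`d_s d_k` dividing both total sums `σ_a`, `σ_b`, and `σ_a σ_b = d_s d_k r`. -/
structure Jumper (n s k r : ℕ) where
  aSeq : ℕ → ℕ
  bSeq : ℕ → ℕ
  ha_per : ∀ i, aSeq (i + Nat.gcd n s) = aSeq i
  hb_per : ∀ i, bSeq (i + Nat.gcd n k) = bSeq i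
  ha_lb : ∀ i, 1 ≤ aSeq i
  ha_ub : ∀ i, aSeq i < s
  hb_lb : ∀ i, 1 ≤ bSeq i
  hb_ub : ∀ i, bSeq i < k
  hb_distinct : ∀ l l' : ℕ, l < Nat.gcd n k → l' < Nat.gcd n k →
    (∑ i ∈ Finset.range l, bSeq i) % Nat.gcd n k
      = (∑ i ∈ Finset.range l', bSeq i) % Nat.gcd n k → l = l'
  hb_div : Nat.gcd n s * Nat.gcd n k ∣ ∑ i ∈ Finset.range (Nat.gcd n k), bSeq i
  ha_distinct : ∀ m m' : ℕ, m < Nat.gcd n s → m' < Nat.gcd n s →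
    (∑ i ∈ Finset.range m, aSeq i) % Nat.gcd n s
      = (∑ i ∈ Finset.range m', aSeq i) % Nat.gcd n s → m = m'
  ha_div : Nat.gcd n s * Nat.gcd n k ∣ ∑ i ∈ Finset.range (Nat.gcd n s), aSeq i
  hprod : (∑ i ∈ Finset.range (Nat.gcd n s), aSeq i)
      * (∑ i ∈ Finset.range (Nat.gcd n k), bSeq i)
      = Nat.gcd n s * Nat.gcd n k * r

/-!
Write `D = d_s d_k`, `σ_a = D a` and `σ_b = D b`. Then `r = D a b` and `s k = D q` with
`q = (s / d_s) (k / d_k)`, so `n / D = q + a b`. Since `n / D` divides both `n / d_s` and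
`n / d_k`, it is coprime to both factors of `q`; hence `gcd (q + a b, a b) = gcd (q + a b, q) = 1`,
and `b` divides `a b`.
-/

theorem Nat.coprime_div_gcd_mul_gcd {n s k : ℕ} (hn : 0 < n)
    (hdvd : n.gcd s * n.gcd k ∣ n) :
    Nat.Coprime (n / (n.gcd s * n.gcd k)) (s / n.gcd s * (k / n.gcd k)) := by
  have hs : n / (n.gcd s * n.gcd k) ∣ n / n.gcd s :=
    Nat.div_dvd_div_left hdvd (dvd_mul_right _ _)
  have hk : n / (n.gcd s * n.gcd k) ∣ n / n.gcd k :=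
    Nat.div_dvd_div_left hdvd (dvd_mul_left _ _)
  exact Nat.Coprime.mul_right
    ((Nat.coprime_div_gcd_div_gcd (Nat.gcd_pos_of_pos_left s hn)).coprime_dvd_left hs)
    ((Nat.coprime_div_gcd_div_gcd (Nat.gcd_pos_of_pos_left k hn)).coprime_dvd_left hk)

theorem Nat.gcd_mul_gcd_mul_div_gcd_mul_div_gcd (n s k : ℕ) :
    n.gcd s * n.gcd k * (s / n.gcd s * (k / n.gcd k)) = s * k := by
  rw [Nat.div_mul_div_comm (Nat.gcd_dvd_right n s) (Nat.gcd_dvd_right n k),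
    Nat.mul_div_cancel' (mul_dvd_mul (Nat.gcd_dvd_right n s) (Nat.gcd_dvd_right n k))]

namespace Jumper

variable {n s k r : ℕ} (J : Jumper n s k r)

def sigmaA : ℕ := ∑ i ∈ Finset.range (n.gcd s), J.aSeq i

def sigmaB : ℕ := ∑ i ∈ Finset.range (n.gcd k), J.bSeq i

theorem mul_sigmaA_div_mul_sigmaB_div (hn : 0 < n) :
    n.gcd s * n.gcd k *
      (J.sigmaA / (n.gcd s * n.gcd k) * (J.sigmaB / (n.gcd s * n.gcd k))) = r := by
  have hD : 0 < n.gcd s * n.gcd k :=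
    Nat.mul_pos (Nat.gcd_pos_of_pos_left s hn) (Nat.gcd_pos_of_pos_left k hn)
  obtain ⟨a, ha⟩ := J.ha_div
  obtain ⟨b, hb⟩ := J.hb_div
  have hprod := J.hprod
  rw [sigmaA, sigmaB, ha, hb, Nat.mul_div_cancel_left _ hD, Nat.mul_div_cancel_left _ hD]
  rw [ha, hb] at hprod
  exact Nat.eq_of_mul_eq_mul_left hD (by rw [← hprod]; ring)

end Jumper

theorem stmt_14_general (n k s r : ℕ) (hn : n = s * k + r) (hr1 : 1 ≤ r)
    (hdvd : Nat.gcd n s * Nat.gcd n k ∣ n) (J : Jumper n s k r) :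
    Nat.gcd (n / (Nat.gcd n s * Nat.gcd n k))
      ((∑ i ∈ Finset.range (Nat.gcd n k), J.bSeq i)
        / (Nat.gcd n s * Nat.gcd n k)) = 1 := by
  have hn0 : 0 < n := by omega
  set D := n.gcd s * n.gcd k
  have hD0 : 0 < D :=
    Nat.mul_pos (Nat.gcd_pos_of_pos_left s hn0) (Nat.gcd_pos_of_pos_left k hn0)
  set q := s / n.gcd s * (k / n.gcd k)
  set x := J.sigmaA / D * (J.sigmaB / D)
  have hnD : n / D = q + x :=
    Nat.div_eq_of_eq_mul_right hD0 (by
      rw [mul_add, Nat.gcd_mul_gcd_mul_div_gcd_mul_div_gcd, J.mul_sigmaA_div_mul_sigmaB_div hn0, hn])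
  have hq : Nat.Coprime (q + x) q := hnD ▸ Nat.coprime_div_gcd_mul_gcd hn0 hdvd
  have hx : Nat.Coprime (q + x) x :=
    Nat.coprime_add_self_left.mpr (Nat.coprime_self_add_left.mp hq).symm
  rw [hnD]
  exact hx.coprime_dvd_right (dvd_mul_left _ _)

/-- With an `(s,k,n)`-jumper, `gcd(n/(d_s d_k), σ_b/(d_s d_k)) = 1`. -/
theorem stmt_14 (n k s r : ℕ) (hk : 0 < k) (hkn : k < n)
    (hs : s = (n - 1) / k) (hn : n = s * k + r) (hr1 : 1 ≤ r) (hrk : r ≤ k)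
    (hdvd : Nat.gcd n s * Nat.gcd n k ∣ n) (J : Jumper n s k r) :
    Nat.gcd (n / (Nat.gcd n s * Nat.gcd n k))
      ((∑ i ∈ Finset.range (Nat.gcd n k), J.bSeq i)
        / (Nat.gcd n s * Nat.gcd n k)) = 1 :=
  stmt_14_general n k s r hn hr1 hdvd J
end

section
/- Suppose n = sk + r with 1 ≤ r < s, r < k, s = ⌊(n-1)/k⌋, and d_sd_k | n where d_s = gcd(n,s), d_k = gcd(n,k). Then an (s,k,n)-jumper exists. In particular, writing r/(d_sd_k) = r_a·r_b, the sequences with a_0 = d_sd_k r_a - (d_s - 1), a_1 = ... = a_{d_s-1} = 1 (period d_s) and b_0 = d_sd_k r_b - (d_k - 1), b_1 = ... = b_{d_k-1} = 1 (period d_k) form an (s,k,n)-jumper. -/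
open Finset

def spikeSeq (d B i : ℕ) : ℕ := if i % d = 0 then B - (d - 1) else 1

section spikeSeq

variable {d B : ℕ}

lemma spikeSeq_add_period (i : ℕ) : spikeSeq d B (i + d) = spikeSeq d B i := by
  simp only [spikeSeq, Nat.add_mod_right]

lemma one_le_spikeSeq (hdB : d ∣ B) (hB : 0 < B) (i : ℕ) : 1 ≤ spikeSeq d B i := by
  have := Nat.le_of_dvd hB hdB
  unfold spikeSeq; split <;> omega

lemma spikeSeq_le (hB : 0 < B) (i : ℕ) : spikeSeq d B i ≤ B := by
  unfold spikeSeq; split <;> omega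

lemma sum_range_succ_spikeSeq (hdB : d ≤ B) {l : ℕ} (hl : l < d) :
    ∑ i ∈ range (l + 1), spikeSeq d B i = B - d + (l + 1) := by
  induction l with
  | zero => simp only [zero_add, sum_range_one, spikeSeq, Nat.zero_mod, if_true]; omega
  | succ l ih =>
    rw [sum_range_succ, ih (by omega), spikeSeq, Nat.mod_eq_of_lt hl, if_neg (by omega)]
    omega

lemma sum_range_spikeSeq (hdB : d ∣ B) (hB : 0 < B) :
    ∑ i ∈ range d, spikeSeq d B i = B := by
  have hd : 0 < d := Nat.pos_of_dvd_of_pos hdB hB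
  have hdB' : d ≤ B := Nat.le_of_dvd hB hdB
  obtain ⟨l, rfl⟩ : ∃ l, d = l + 1 := ⟨d - 1, by omega⟩
  rw [sum_range_succ_spikeSeq hdB' l.lt_succ_self]
  omega

lemma sum_range_spikeSeq_mod (hdB : d ∣ B) (hB : 0 < B) {l : ℕ} (hl : l < d) :
    (∑ i ∈ range l, spikeSeq d B i) % d = l := by
  cases l with
  | zero => simp
  | succ l =>
    obtain ⟨c, hc⟩ : d ∣ B - d := Nat.dvd_sub hdB dvd_rfl
    rw [sum_range_succ_spikeSeq (Nat.le_of_dvd hB hdB) (by omega), hc, Nat.mul_add_mod,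
      Nat.mod_eq_of_lt hl]

lemma sum_range_spikeSeq_mod_inj (hdB : d ∣ B) (hB : 0 < B) {l l' : ℕ}
    (hl : l < d) (hl' : l' < d)
    (h : (∑ i ∈ range l, spikeSeq d B i) % d = (∑ i ∈ range l', spikeSeq d B i) % d) :
    l = l' := by
  rwa [sum_range_spikeSeq_mod hdB hB hl, sum_range_spikeSeq_mod hdB hB hl'] at h

end spikeSeq

def spikeJumper (n s k r ra rb : ℕ) (hra : 0 < ra) (hrb : 0 < rb)
    (hr : r = Nat.gcd n s * Nat.gcd n k * (ra * rb)) (hrs : r < s) (hrk : r < k) :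
    Jumper n s k r :=
  have hds : 0 < Nat.gcd n s := Nat.gcd_pos_of_pos_right n (by omega)
  have hdk : 0 < Nat.gcd n k := Nat.gcd_pos_of_pos_right n (by omega)
  have hA : 0 < Nat.gcd n s * Nat.gcd n k * ra := by positivity
  have hB : 0 < Nat.gcd n s * Nat.gcd n k * rb := by positivity
  have hdA : Nat.gcd n s ∣ Nat.gcd n s * Nat.gcd n k * ra := ⟨Nat.gcd n k * ra, by ring⟩
  have hdB : Nat.gcd n k ∣ Nat.gcd n s * Nat.gcd n k * rb := ⟨Nat.gcd n s * rb, by ring⟩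
  have hAr : Nat.gcd n s * Nat.gcd n k * ra ≤ r := by
    rw [hr, ← mul_assoc]; exact Nat.le_mul_of_pos_right _ hrb
  have hBr : Nat.gcd n s * Nat.gcd n k * rb ≤ r := by
    rw [hr, mul_comm ra, ← mul_assoc]; exact Nat.le_mul_of_pos_right _ hra
  { aSeq := spikeSeq (Nat.gcd n s) (Nat.gcd n s * Nat.gcd n k * ra)
    bSeq := spikeSeq (Nat.gcd n k) (Nat.gcd n s * Nat.gcd n k * rb)
    ha_per := spikeSeq_add_period
    hb_per := spikeSeq_add_period
    ha_lb := one_le_spikeSeq hdA hA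
    ha_ub := fun i => (spikeSeq_le hA i).trans_lt (hAr.trans_lt hrs)
    hb_lb := one_le_spikeSeq hdB hB
    hb_ub := fun i => (spikeSeq_le hB i).trans_lt (hBr.trans_lt hrk)
    hb_distinct := fun _ _ => sum_range_spikeSeq_mod_inj hdB hB
    hb_div := by rw [sum_range_spikeSeq hdB hB]; exact dvd_mul_right _ _
    ha_distinct := fun _ _ => sum_range_spikeSeq_mod_inj hdA hA
    ha_div := by rw [sum_range_spikeSeq hdA hA]; exact dvd_mul_right _ _
    hprod := by rw [sum_range_spikeSeq hdA hA, sum_range_spikeSeq hdB hB, hr]; ring }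

lemma gcd_mul_gcd_dvd_of_eq_add {n s k r : ℕ} (hn : n = s * k + r)
    (hdvd : Nat.gcd n s * Nat.gcd n k ∣ n) : Nat.gcd n s * Nat.gcd n k ∣ r :=
  (Nat.dvd_add_right (mul_dvd_mul (Nat.gcd_dvd_right n s) (Nat.gcd_dvd_right n k))).mp
    (hn ▸ hdvd)

theorem stmt_15_general (n k s r : ℕ) (hn : n = s * k + r) (hr1 : 1 ≤ r)
    (hrk : r < k) (hrs : r < s)
    (hdvd : Nat.gcd n s * Nat.gcd n k ∣ n) :
    Nonempty (Jumper n s k r) ∧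
    ∀ ra rb : ℕ, 0 < ra → 0 < rb →
      ra * rb = r / (Nat.gcd n s * Nat.gcd n k) →
      ∃ J : Jumper n s k r,
        (∀ i, J.aSeq i = if i % Nat.gcd n s = 0
          then Nat.gcd n s * Nat.gcd n k * ra - (Nat.gcd n s - 1) else 1) ∧
        (∀ i, J.bSeq i = if i % Nat.gcd n k = 0
          then Nat.gcd n s * Nat.gcd n k * rb - (Nat.gcd n k - 1) else 1) := by
  have hdr := gcd_mul_gcd_dvd_of_eq_add hn hdvd
  have hr : ∀ ra rb, ra * rb = r / (Nat.gcd n s * Nat.gcd n k) →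
      r = Nat.gcd n s * Nat.gcd n k * (ra * rb) :=
    fun ra rb h => by rw [h, Nat.mul_div_cancel' hdr]
  have hq : 0 < r / (Nat.gcd n s * Nat.gcd n k) :=
    Nat.div_pos (Nat.le_of_dvd hr1 hdr) (Nat.pos_of_dvd_of_pos hdr hr1)
  refine ⟨⟨spikeJumper n s k r _ 1 hq one_pos (hr _ _ (mul_one _)) hrs hrk⟩, ?_⟩
  intro ra rb hra hrb hrab
  exact ⟨spikeJumper n s k r ra rb hra hrb (hr ra rb hrab) hrs hrk, fun _ => rfl, fun _ => rfl⟩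

/-- Under the standing assumptions an `(s,k,n)`-jumper exists; in particular,
for any factorisation `r/(d_s d_k) = r_a · r_b`, the pair of sequences with
`a_0 = d_s d_k r_a - (d_s - 1)`, `a_i = 1` otherwise (period `d_s`), and
`b_0 = d_s d_k r_b - (d_k - 1)`, `b_i = 1` otherwise (period `d_k`),
is an `(s,k,n)`-jumper. -/
theorem stmt_15 (n k s r : ℕ) (hk : 0 < k) (hkn : k < n)
    (hs : s = (n - 1) / k) (hn : n = s * k + r) (hr1 : 1 ≤ r)
    (hrk : r < k) (hrs : r < s)
    (hdvd : Nat.gcd n s * Nat.gcd n k ∣ n) :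
    Nonempty (Jumper n s k r) ∧
    ∀ ra rb : ℕ, 0 < ra → 0 < rb →
      ra * rb = r / (Nat.gcd n s * Nat.gcd n k) →
      ∃ J : Jumper n s k r,
        (∀ i, J.aSeq i = if i % Nat.gcd n s = 0
          then Nat.gcd n s * Nat.gcd n k * ra - (Nat.gcd n s - 1) else 1) ∧
        (∀ i, J.bSeq i = if i % Nat.gcd n k = 0
          then Nat.gcd n s * Nat.gcd n k * rb - (Nat.gcd n k - 1) else 1) :=
  stmt_15_general n k s r hn hr1 hrk hrs hdvd
end

section
/- Let ((a_i),(b_i)) be an (s,k,n)-jumper (with d_sd_k | n, n = sk+r, r < s, r < k). The map π: Z_n → Z_n defined by π((αd_k + ℓ)s + Σ_{i=0}^{m-1} a_i) = mk - Σ_{i=0}^{ℓ-1} b_i - α σ_b (for 0 ≤ m < d_s, 0 ≤ ℓ < d_k, 0 ≤ α < n/(d_sd_k)) is a well-defined bijection of Z_n. -/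
open Finset

theorem Nat.modEq_of_dvd_of_dvd {d x y : ℕ} (hx : d ∣ x) (hy : d ∣ y) : x ≡ y [MOD d] :=
  (Nat.modEq_zero_iff_dvd.2 hx).trans (Nat.modEq_zero_iff_dvd.2 hy).symm

theorem Nat.eq_of_mul_modEq_mul_of_coprime {D M t x x' : ℕ} (hD : D ≠ 0) (hMt : M.Coprime t)
    (hx : x < M) (hx' : x' < M) (h : x * (D * t) ≡ x' * (D * t) [MOD D * M]) : x = x' := by
  rw [mul_left_comm, mul_left_comm x'] at h
  exact ((Nat.ModEq.mul_left_cancel' hD h).cancel_right_of_coprime hMt).eq_of_lt_of_lt hx hx'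

theorem Nat.eq_and_eq_of_mul_add_eq_mul_add_s16 {d a a' b b' : ℕ} (hb : b < d) (hb' : b' < d)
    (h : a * d + b = a' * d + b') : a = a' ∧ b = b' := by
  have digits : ∀ {x y}, y < d → (x * d + y) / d = x ∧ (x * d + y) % d = y := fun hy ↦
    (Nat.div_mod_unique (by omega)).2 ⟨by ring, hy⟩
  obtain ⟨hq, hr⟩ := digits (x := a) hb
  obtain ⟨hq', hr'⟩ := digits (x := a') hb'
  rw [h] at hq hr
  exact ⟨hq.symm.trans hq', hr.symm.trans hr'⟩

theorem Nat.coprime_of_eq_gcd_mul {n s M t : ℕ} (h0 : n.gcd s ≠ 0) (hn : n = n.gcd s * M)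
    (hs : s = n.gcd s * t) : M.Coprime t := by
  have h := Nat.gcd_mul_left (n.gcd s) M t
  rw [← hn, ← hs] at h
  exact (Nat.mul_eq_left h0).1 h.symm

theorem exists_perm_apply_eq_of_injOn {α β : Type*} [Fintype β] {S : Finset α} {g h : α → β}
    (hg : Set.InjOn g S) (hh : Set.InjOn h S) (hS : #S = Fintype.card β) :
    ∃ π : Equiv.Perm β, ∀ a ∈ S, π (g a) = h a := by
  have hcard : Fintype.card S = Fintype.card β := by rw [Fintype.card_coe, hS]
  have bij : ∀ {f : α → β}, Set.InjOn f S → Function.Bijective (fun a : S ↦ f a) := fun hf ↦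
    (Fintype.bijective_iff_injective_and_card _).2
      ⟨fun a b hab ↦ Subtype.ext (hf a.2 b.2 hab), hcard⟩
  refine ⟨(Equiv.ofBijective _ (bij hg)).symm.trans (Equiv.ofBijective _ (bij hh)), fun a ha ↦ ?_⟩
  exact congrArg (Equiv.ofBijective _ (bij hh))
    ((Equiv.ofBijective _ (bij hg)).symm_apply_apply ⟨a, ha⟩)

theorem Nat.Coprime.coprime_of_eq_add_mul {N a u v : ℕ} (h : N.Coprime a)
    (hN : N = a + u * v) : N.Coprime v := by
  subst hN
  exact (Nat.coprime_add_mul_right_left a v u).2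
    (Nat.coprime_self_add_left.1 h).coprime_mul_left.symm

theorem eq_mul_add_mul_of_mul_eq {n s k r ds dk N s₁ k₁ u v : ℕ} (hD : ds * dk ≠ 0)
    (hn : n = s * k + r) (hN : n = ds * dk * N) (hs : s = ds * s₁) (hk : k = dk * k₁)
    (hprod : ds * dk * u * (ds * dk * v) = ds * dk * r) : N = s₁ * k₁ + u * v := by
  have hr : r = ds * dk * (u * v) :=
    Nat.eq_of_mul_eq_mul_left (Nat.pos_of_ne_zero hD) (by rw [← hprod]; ring)
  refine Nat.eq_of_mul_eq_mul_left (Nat.pos_of_ne_zero hD) ?_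
  rw [← hN, hn, hs, hk, hr]
  ring

section MixedRadix

variable {n ds dk N : ℕ}

theorem injOn_mixedRadix_add {s s₁ : ℕ} {A : ℕ → ℕ} (hn : n = ds * dk * N)
    (hs : s = ds * s₁) (hcop : (dk * N).Coprime s₁)
    (hA : ∀ m m' : ℕ, m < ds → m' < ds → A m % ds = A m' % ds → m = m') :
    Set.InjOn (fun p : ℕ × ℕ × ℕ ↦ (((p.1 * dk + p.2.1) * s + A p.2.2 : ℕ) : ZMod n))
      (range N ×ˢ range dk ×ˢ range ds : Finset (ℕ × ℕ × ℕ)) := by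
  rintro ⟨α, l, m⟩ hp ⟨α', l', m'⟩ hp' h
  simp only [coe_product, Set.mem_prod, mem_coe, mem_range] at hp hp'
  replace h := (ZMod.natCast_eq_natCast_iff _ _ _).1 h
  have hds : ds ∣ n := ⟨dk * N, by rw [hn, mul_assoc]⟩
  obtain rfl : m = m' := hA m m' hp.2.2 hp'.2.2 <|
    (Nat.modEq_of_dvd_of_dvd (hs ▸ dvd_mul_of_dvd_right (dvd_mul_right ds s₁) _)
      (hs ▸ dvd_mul_of_dvd_right (dvd_mul_right ds s₁) _)).add_left_cancel (h.of_dvd hds)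
  have hdigits : α * dk + l = α' * dk + l' := by
    refine Nat.eq_of_mul_modEq_mul_of_coprime (D := ds) (by omega) hcop ?_ ?_ ?_
    · rw [mul_comm α, mul_comm dk N]; exact Nat.mul_add_lt_mul_of_lt_of_lt hp.1 hp.2.1
    · rw [mul_comm α', mul_comm dk N]; exact Nat.mul_add_lt_mul_of_lt_of_lt hp'.1 hp'.2.1
    · rw [← hs, ← mul_assoc, ← hn]; exact h.add_right_cancel' _
  obtain ⟨rfl, rfl⟩ := Nat.eq_and_eq_of_mul_add_eq_mul_add_s16 hp.2.1 hp'.2.1 hdigits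
  rfl

theorem injOn_sub_sub_mul {k k₁ σ v : ℕ} {B : ℕ → ℕ} (hn : n = ds * dk * N)
    (hk : k = dk * k₁) (hσ : σ = ds * dk * v) (hk₁ : ds.Coprime k₁) (hv : N.Coprime v)
    (hB : ∀ l l' : ℕ, l < dk → l' < dk → B l % dk = B l' % dk → l = l') :
    Set.InjOn (fun p : ℕ × ℕ × ℕ ↦
        ((p.2.2 * k : ℕ) : ZMod n) - (B p.2.1 : ZMod n) - ((p.1 * σ : ℕ) : ZMod n))
      (range N ×ˢ range dk ×ˢ range ds : Finset (ℕ × ℕ × ℕ)) := by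
  rintro ⟨α, l, m⟩ hp ⟨α', l', m'⟩ hp' h
  simp only [coe_product, Set.mem_prod, mem_coe, mem_range] at hp hp'
  replace h : m * k + α' * σ + B l' ≡ m' * k + α * σ + B l [MOD n] := by
    simp only [sub_sub, sub_eq_sub_iff_add_eq_add] at h
    rw [← ZMod.natCast_eq_natCast_iff]
    push_cast at h ⊢
    linear_combination h
  have hdk_k : dk ∣ k := hk ▸ dvd_mul_right _ _
  have hD_σ : ds * dk ∣ σ := hσ ▸ dvd_mul_right _ _
  have hdk_σ : dk ∣ σ := (dvd_mul_left _ _).trans hD_σ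
  obtain rfl : l' = l := hB l' l hp'.2.1 hp.2.1 <|
    (Nat.modEq_of_dvd_of_dvd (dvd_add (hdk_k.mul_left m) (hdk_σ.mul_left α'))
      (dvd_add (hdk_k.mul_left m') (hdk_σ.mul_left α))).add_left_cancel
      (h.of_dvd ⟨ds * N, by rw [hn]; ring⟩)
  replace h := h.add_right_cancel' _
  obtain rfl : m = m' := by
    refine Nat.eq_of_mul_modEq_mul_of_coprime (D := dk) (by omega) hk₁ hp.2.2 hp'.2.2 ?_
    rw [← hk, mul_comm dk ds]
    exact (Nat.modEq_of_dvd_of_dvd (hD_σ.mul_left α') (hD_σ.mul_left α)).add_right_cancel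
      (h.of_dvd (hn ▸ dvd_mul_right _ _))
  obtain rfl : α' = α := by
    refine Nat.eq_of_mul_modEq_mul_of_coprime (D := ds * dk)
      (mul_ne_zero (by omega) (by omega)) hv hp'.1 hp.1 ?_
    rw [← hσ, ← hn]
    exact h.add_left_cancel' _
  rfl

end MixedRadix

theorem stmt_16_general (n k s r : ℕ) (hn : n = s * k + r) (hr1 : 1 ≤ r)
    (hdvd : Nat.gcd n s * Nat.gcd n k ∣ n) (J : Jumper n s k r) :
    ∃ π : Equiv.Perm (ZMod n),
      ∀ α l m : ℕ,
        α < n / (Nat.gcd n s * Nat.gcd n k) →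
        l < Nat.gcd n k → m < Nat.gcd n s →
        π (((α * Nat.gcd n k + l) * s + ∑ i ∈ Finset.range m, J.aSeq i : ℕ)
            : ZMod n)
          = ((m * k : ℕ) : ZMod n)
            - ((∑ i ∈ Finset.range l, J.bSeq i : ℕ) : ZMod n)
            - ((α * ∑ i ∈ Finset.range (Nat.gcd n k), J.bSeq i : ℕ) : ZMod n) := by
  have : NeZero n := ⟨by omega⟩
  have hds : n.gcd s ≠ 0 := Nat.gcd_ne_zero_left (NeZero.ne n)
  have hdk : n.gcd k ≠ 0 := Nat.gcd_ne_zero_left (NeZero.ne n)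
  obtain ⟨N, hN⟩ := hdvd
  obtain ⟨s₁, hs₁⟩ := Nat.gcd_dvd_right n s
  obtain ⟨k₁, hk₁⟩ := Nat.gcd_dvd_right n k
  obtain ⟨u, hu⟩ := J.ha_div
  obtain ⟨v, hv⟩ := J.hb_div
  have hNuv : N = s₁ * k₁ + u * v :=
    eq_mul_add_mul_of_mul_eq (mul_ne_zero hds hdk) hn hN hs₁ hk₁ (hu ▸ hv ▸ J.hprod)
  have hcop_s : (n.gcd k * N).Coprime s₁ :=
    Nat.coprime_of_eq_gcd_mul hds (by rw [← mul_assoc]; exact hN) hs₁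
  have hcop_k : (n.gcd s * N).Coprime k₁ :=
    Nat.coprime_of_eq_gcd_mul hdk (hN.trans (by ring)) hk₁
  have hcop_v : N.Coprime v :=
    (hcop_s.coprime_mul_left.mul_right hcop_k.coprime_mul_left).coprime_of_eq_add_mul hNuv
  have hcard : #(range N ×ˢ range (n.gcd k) ×ˢ range (n.gcd s)) = Fintype.card (ZMod n) := by
    rw [card_product, card_product, card_range, card_range, card_range, ZMod.card]
    linarith
  obtain ⟨π, hπ⟩ := exists_perm_apply_eq_of_injOn
    (injOn_mixedRadix_add hN hs₁ hcop_s J.ha_distinct)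
    (injOn_sub_sub_mul hN hk₁ hv hcop_k.coprime_mul_right hcop_v J.hb_distinct) hcard
  have hNdiv : n / (n.gcd s * n.gcd k) = N :=
    Nat.div_eq_of_eq_mul_left (Nat.pos_of_ne_zero (mul_ne_zero hds hdk)) (hN.trans (mul_comm _ _))
  refine ⟨π, fun α l m hα hl hm ↦ hπ (α, l, m) ?_⟩
  simp only [mem_product, mem_range]
  exact ⟨hNdiv ▸ hα, hl, hm⟩

/-- The map `(α d_k + ℓ) s + Σ_{i<m} a_i ↦ m k - Σ_{i<ℓ} b_i - α σ_b`
determined by an `(s,k,n)`-jumper is a well-defined bijection of `ZMod n`. -/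
theorem stmt_16 (n k s r : ℕ) (hk : 0 < k) (hkn : k < n)
    (hs : s = (n - 1) / k) (hn : n = s * k + r) (hr1 : 1 ≤ r)
    (hrk : r < k) (hrs : r < s)
    (hdvd : Nat.gcd n s * Nat.gcd n k ∣ n) (J : Jumper n s k r) :
    ∃ π : Equiv.Perm (ZMod n),
      ∀ α l m : ℕ,
        α < n / (Nat.gcd n s * Nat.gcd n k) →
        l < Nat.gcd n k → m < Nat.gcd n s →
        π (((α * Nat.gcd n k + l) * s + ∑ i ∈ Finset.range m, J.aSeq i : ℕ)
            : ZMod n)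
          = ((m * k : ℕ) : ZMod n)
            - ((∑ i ∈ Finset.range l, J.bSeq i : ℕ) : ZMod n)
            - ((α * ∑ i ∈ Finset.range (Nat.gcd n k), J.bSeq i : ℕ) : ZMod n) :=
  stmt_16_general n k s r hn hr1 hdvd J
end

section
/- Let u = (d_k s, -σ_b) and v = (σ_a, d_s k) in Z², where σ_a, σ_b come from an (s,k,n)-jumper (so d_sd_k | σ_a, d_sd_k | σ_b, σ_aσ_b = d_sd_k r, and n = sk + r). Then (n,0) = (k/d_k)u + (σ_b/(d_sd_k))v and (0,n) = -(σ_a/(d_sd_k))u + (s/d_s)v; in particular (n,0) and (0,n) lie in the lattice generated by u and v. -/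
/-!
The matrix with rows `u = (d_k s, -σ_b)` and `v = (σ_a, d_s k)` has determinant
`d_s d_k s k + σ_a σ_b = d_s d_k (s k + r) = d_s d_k n`. Hence `n` times its inverse is its
adjugate divided by `d_s d_k`, and the divisibility hypotheses make that an integer matrix:
its entries are the coefficients `k / d_k`, `σ_b / (d_s d_k)`, `-σ_a / (d_s d_k)`, `s / d_s`.
-/

theorem jumper_coefficients (n s k r ds dk σa σb : ℕ) (hdk : dk ∣ k) (hds : ds ∣ s)
    (hD : 0 < ds * dk) (hn : n = s * k + r) (hσa : ds * dk ∣ σa) (hσb : ds * dk ∣ σb)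
    (hprod : σa * σb = ds * dk * r) :
    ((n : ℤ), (0 : ℤ)) =
        ((k / dk : ℕ) : ℤ) • (((dk * s : ℕ) : ℤ), -(σb : ℤ))
          + ((σb / (ds * dk) : ℕ) : ℤ) • ((σa : ℤ), ((ds * k : ℕ) : ℤ)) ∧
    ((0 : ℤ), (n : ℤ)) =
        -((σa / (ds * dk) : ℕ) : ℤ) • (((dk * s : ℕ) : ℤ), -(σb : ℤ))
          + ((s / ds : ℕ) : ℤ) • ((σa : ℤ), ((ds * k : ℕ) : ℤ)) := by
  obtain ⟨k', rfl⟩ := hdk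
  obtain ⟨s', rfl⟩ := hds
  obtain ⟨a, rfl⟩ := hσa
  obtain ⟨b, rfl⟩ := hσb
  have hr : r = ds * dk * (a * b) :=
    Nat.eq_of_mul_eq_mul_left hD (by rw [← hprod]; ring)
  have hdk_pos : 0 < dk := Nat.pos_of_mul_pos_left hD
  have hds_pos : 0 < ds := Nat.pos_of_mul_pos_right hD
  subst hn hr
  simp only [Nat.mul_div_cancel_left _ hD, Nat.mul_div_cancel_left _ hdk_pos,
    Nat.mul_div_cancel_left _ hds_pos]
  constructor <;> ext <;> simp only [Prod.fst_add, Prod.snd_add, Prod.smul_fst,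
    Prod.smul_snd, smul_eq_mul] <;> push_cast <;> ring

theorem stmt_18_general (n s k r : ℕ) (hr : 0 < r)
    (hn : n = s * k + r)
    (σa σb : ℕ) (hσa : Nat.gcd n s * Nat.gcd n k ∣ σa)
    (hσb : Nat.gcd n s * Nat.gcd n k ∣ σb)
    (hprod : σa * σb = Nat.gcd n s * Nat.gcd n k * r)
    (u v : ℤ × ℤ)
    (hu : u = (((Nat.gcd n k * s : ℕ) : ℤ), -(σb : ℤ)))
    (hv : v = (((σa : ℕ) : ℤ), ((Nat.gcd n s * k : ℕ) : ℤ))) :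
    (((n : ℤ), (0 : ℤ)) =
        ((k / Nat.gcd n k : ℕ) : ℤ) • u
          + ((σb / (Nat.gcd n s * Nat.gcd n k) : ℕ) : ℤ) • v) ∧
    (((0 : ℤ), (n : ℤ)) =
        -(((σa / (Nat.gcd n s * Nat.gcd n k) : ℕ) : ℤ)) • u
          + ((s / Nat.gcd n s : ℕ) : ℤ) • v) ∧
    ((n : ℤ), (0 : ℤ)) ∈ AddSubgroup.closure ({u, v} : Set (ℤ × ℤ)) ∧
    ((0 : ℤ), (n : ℤ)) ∈ AddSubgroup.closure ({u, v} : Set (ℤ × ℤ)) := by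
  have hn0 : 0 < n := by omega
  have hD : 0 < Nat.gcd n s * Nat.gcd n k :=
    Nat.mul_pos (Nat.gcd_pos_of_pos_left s hn0) (Nat.gcd_pos_of_pos_left k hn0)
  subst hu hv
  obtain ⟨hx, hy⟩ := jumper_coefficients n s k r _ _ σa σb (Nat.gcd_dvd_right n k)
    (Nat.gcd_dvd_right n s) hD hn hσa hσb hprod
  exact ⟨hx, hy, AddSubgroup.mem_closure_pair.2 ⟨_, _, hx.symm⟩,
    AddSubgroup.mem_closure_pair.2 ⟨_, _, hy.symm⟩⟩

/-- With `u = (d_k s, -σ_b)` and `v = (σ_a, d_s k)` coming from an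
`(s,k,n)`-jumper (`d_s d_k ∣ σ_a`, `d_s d_k ∣ σ_b`, `σ_a σ_b = d_s d_k r`,
`n = sk + r`): `(n,0) = (k/d_k) u + (σ_b/(d_s d_k)) v`,
`(0,n) = -(σ_a/(d_s d_k)) u + (s/d_s) v`, and in particular `(n,0)` and
`(0,n)` lie in the lattice (additive subgroup) generated by `u` and `v`. -/
theorem stmt_18 (n s k r : ℕ) (hk : 0 < k) (hsp : 0 < s) (hr : 0 < r)
    (hn : n = s * k + r)
    (σa σb : ℕ) (hσa : Nat.gcd n s * Nat.gcd n k ∣ σa)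
    (hσb : Nat.gcd n s * Nat.gcd n k ∣ σb)
    (hprod : σa * σb = Nat.gcd n s * Nat.gcd n k * r)
    (u v : ℤ × ℤ)
    (hu : u = (((Nat.gcd n k * s : ℕ) : ℤ), -(σb : ℤ)))
    (hv : v = (((σa : ℕ) : ℤ), ((Nat.gcd n s * k : ℕ) : ℤ))) :
    (((n : ℤ), (0 : ℤ)) =
        ((k / Nat.gcd n k : ℕ) : ℤ) • u
          + ((σb / (Nat.gcd n s * Nat.gcd n k) : ℕ) : ℤ) • v) ∧
    (((0 : ℤ), (n : ℤ)) =
        -(((σa / (Nat.gcd n s * Nat.gcd n k) : ℕ) : ℤ)) • u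
          + ((s / Nat.gcd n s : ℕ) : ℤ) • v) ∧
    ((n : ℤ), (0 : ℤ)) ∈ AddSubgroup.closure ({u, v} : Set (ℤ × ℤ)) ∧
    ((0 : ℤ), (n : ℤ)) ∈ AddSubgroup.closure ({u, v} : Set (ℤ × ℤ)) :=
  stmt_18_general n s k r hr hn σa σb hσa hσb hprod u v hu hv
end
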